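/- Let A be a finite set, G a group, H ≤ G a subgroup, F ⊆ H a finite subset and L ⊆ A^F. Let X ⊆ A^G and Y ⊆ A^H be the SFTs defined by (F, L) on G and on H respectively, and assume Y is nonempty. Let g ∈ G be such that Cl(g) ∩ R_G(Free(Y)) = ∅, i.e. for all t ∈ G and all integers n > 0, the element (t g t⁻¹)^n does not lie in Free(Y). Then there exists x ∈ X with g·x = x; in particular g ∉ Free(X). -/

import Mathlib

variable {G A : Type*}

/-- The left shift action of a group on configurations: `(shift g x) h = x (g⁻¹ * h)`. -/
def shift [Group G] (g : G) (x : G → A) : G → A := fun h => x (g⁻¹ * h)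

/-- The subshift of finite type on `G` defined by the shape `F` and the pattern set `L`:
all configurations `x` such that for every `g`, the restriction of `g • x` to `F` lies in `L`. -/
def SFT [Group G] (F : Set G) (L : Set (F → A)) : Set (G → A) :=
  {x | ∀ g : G, (fun f : F => shift g x f) ∈ L}

/-- The subshift of finite type on the subgroup `H` defined by the shape `F ⊆ H`
and the pattern set `L`. -/
def SFTon [Group G] (H : Subgroup G) (F : Set G) (hF : F ⊆ (H : Set G)) (L : Set (F → A)) :
    Set (↥H → A) :=
  {y | ∀ h : ↥H, (fun f : F => y (h⁻¹ * ⟨(f : G), hF f.2⟩)) ∈ L}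

/-- The free part of a subshift: elements acting freely on every configuration. -/
def freePart [Group G] (X : Set (G → A)) : Set G := {g | ∀ x ∈ X, shift g x ≠ x}

/-!
Let `K = ⟨g⟩`. For a double coset `K t H`, the elements of `H` that are conjugated by `t` into
`K` form the cyclic group `H ∩ t⁻¹ K t`, generated by some `(t⁻¹ g t)ⁿ`. If `n > 0` the
hypothesis gives a configuration `y_t ∈ Y` fixed by this generator, and if `n = 0` any
`y_t ∈ Y` will do. The configuration `x (κ t h) = y_t h` (for `κ ∈ K`, `h ∈ H`, `t` a chosen
representative of `K t H`) is then well defined, fixed by `g`, and its patterns are those of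
the `y_t`, so it lies in `X`.
-/

section Shift

variable [Group G]

@[simp]
lemma shift_one (x : G → A) : shift 1 x = x := by
  funext h
  simp [shift]

lemma shift_mul (a b : G) (x : G → A) : shift (a * b) x = shift a (shift b x) := by
  funext h
  simp [shift, mul_assoc]

def shiftStabilizer (x : G → A) : Subgroup G where
  carrier := {g | shift g x = x}
  one_mem' := shift_one x
  mul_mem' {a b} (ha : shift a x = x) (hb : shift b x = x) := by
    change shift (a * b) x = x
    rw [shift_mul, hb, ha]
  inv_mem' {a} (ha : shift a x = x) := by
    change shift a⁻¹ x = x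
    conv_lhs => rw [← ha, ← shift_mul, inv_mul_cancel, shift_one]

lemma mem_shiftStabilizer {g : G} {x : G → A} : g ∈ shiftStabilizer x ↔ shift g x = x :=
  Iff.rfl

end Shift

lemma Int.exists_addSubgroup_eq_zmultiples_natCast (I : AddSubgroup ℤ) :
    ∃ d : ℕ, I = AddSubgroup.zmultiples (d : ℤ) := by
  obtain ⟨a, rfl⟩ := Int.subgroup_cyclic I
  exact ⟨a.natAbs, by rw [Int.zmultiples_natAbs, AddSubgroup.zmultiples_eq_closure]⟩

lemma Subgroup.exists_zpow_mem_iff_dvd [Group G] (H : Subgroup G) (c : G) :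
    ∃ d : ℕ, ∀ m : ℤ, c ^ m ∈ H ↔ (d : ℤ) ∣ m := by
  let I : AddSubgroup ℤ :=
    { carrier := {m | c ^ m ∈ H}
      zero_mem' := by simp
      add_mem' := fun ha hb => by simpa [zpow_add] using H.mul_mem ha hb
      neg_mem' := fun ha => by simpa [zpow_neg] using H.inv_mem ha }
  obtain ⟨d, hd⟩ := Int.exists_addSubgroup_eq_zmultiples_natCast I
  exact ⟨d, fun m => by rw [← Int.mem_zmultiples_iff, ← hd]; rfl⟩

lemma exists_forall_mem_zpowers_shift_eq [Group G] {H : Subgroup G} {Y : Set (H → A)}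
    (hY : Y.Nonempty) {c : G}
    (hc : ∀ n : ℕ, 0 < n → ∀ k : H, (k : G) = c ^ n → k ∉ freePart Y) :
    ∃ y ∈ Y, ∀ k : H, (k : G) ∈ Subgroup.zpowers c → shift k y = y := by
  obtain ⟨d, hd⟩ := H.exists_zpow_mem_iff_dvd c
  let k₀ : H := ⟨c ^ (d : ℤ), (hd d).2 dvd_rfl⟩
  obtain ⟨y, hy, hk₀⟩ : ∃ y ∈ Y, shift k₀ y = y := by
    rcases d.eq_zero_or_pos with hd0 | hdpos
    · obtain ⟨y, hy⟩ := hY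
      have hk₀ : k₀ = 1 := Subtype.ext (by simp [k₀, hd0])
      exact ⟨y, hy, by rw [hk₀, shift_one]⟩
    · simpa [freePart] using hc d hdpos k₀ (zpow_natCast c d)
  refine ⟨y, hy, fun k hk => ?_⟩
  obtain ⟨m, hm⟩ := Subgroup.mem_zpowers_iff.1 hk
  obtain ⟨q, rfl⟩ := (hd m).1 (hm ▸ k.2)
  have hkq : k = k₀ ^ q := Subtype.ext (by simp [k₀, ← hm, zpow_mul])
  rw [hkq, ← mem_shiftStabilizer]
  exact zpow_mem (mem_shiftStabilizer.2 hk₀) q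

lemma apply_eq_of_mul_eq_mul [Group G] {K H : Subgroup G} {t : G} {y : H → A}
    (hy : ∀ k : H, t * k * t⁻¹ ∈ K → shift k y = y) {κ κ' : G} (hκ : κ ∈ K) (hκ' : κ' ∈ K)
    {h h' : H} (he : κ * t * h = κ' * t * h') : y h = y h' := by
  have hconj : t * ((h' * h⁻¹ : H) : G) * t⁻¹ = κ'⁻¹ * κ := by
    have ht : t * h' = κ'⁻¹ * (κ * t * h) := by rw [he]; group
    push_cast
    rw [← mul_assoc t, ht]
    group
  have hfix := congrFun (hy _ (hconj ▸ K.mul_mem (K.inv_mem hκ') hκ)) h'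
  simpa [shift] using hfix

theorem exists_mem_SFT_forall_shift_eq [Group G] (K H : Subgroup G) {F : Set G}
    (hF : F ⊆ (H : Set G)) {L : Set (F → A)}
    (hy : ∀ t : G, ∃ y ∈ SFTon H F hF L, ∀ k : H, t * k * t⁻¹ ∈ K → shift k y = y) :
    ∃ x ∈ SFT F L, ∀ κ ∈ K, shift κ x = x := by
  choose y hyY hyfix using hy
  let rep : G → G := fun u => (DoubleCoset.mk K H u).out
  have rep_mul : ∀ u, ∀ κ ∈ K, ∀ h ∈ H, rep (κ * u * h) = rep u := fun u κ hκ h hh =>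
    congrArg Quotient.out ((DoubleCoset.eq K H u _).2 ⟨κ, hκ, h, hh, rfl⟩).symm
  have decomp : ∀ u, ∃ κ ∈ K, ∃ h ∈ H, u = κ * rep u * h := fun u =>
    (DoubleCoset.eq K H (rep u) u).1 (DoubleCoset.out_eq' K H _)
  choose κ hκ η hη hu using decomp
  let x : G → A := fun u => y (rep u) ⟨η u, hη u⟩
  have x_eq : ∀ u, ∀ κ' ∈ K, ∀ h' : H, u = κ' * rep u * h' → x u = y (rep u) h' :=
    fun u κ' hκ' h' hu' => apply_eq_of_mul_eq_mul (hyfix _) (hκ u) hκ' ((hu u).symm.trans hu')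
  refine ⟨x, fun s => ?_, fun κ₀ hκ₀ => funext fun u => ?_⟩
  · have hrep : ∀ f : F, rep (s⁻¹ * f) = rep s⁻¹ := fun f => by
      simpa using rep_mul s⁻¹ 1 K.one_mem f (hF f.2)
    have hpat : (fun f : F => shift s x f) =
        fun f : F => y (rep s⁻¹) ((⟨η s⁻¹, hη s⁻¹⟩ : H)⁻¹⁻¹ * ⟨f, hF f.2⟩) := by
      funext f
      refine (x_eq _ (κ s⁻¹) (hκ s⁻¹) _ ?_).trans (by rw [hrep f])
      rw [hrep f, inv_inv]
      simp only [Subgroup.coe_mul]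
      rw [← mul_assoc, ← hu s⁻¹]
    rw [hpat]
    exact hyY _ _
  · have hrep : rep (κ₀⁻¹ * u) = rep u := by
      simpa using rep_mul u κ₀⁻¹ (K.inv_mem hκ₀) 1 H.one_mem
    refine (x_eq _ (κ₀⁻¹ * κ u) (K.mul_mem (K.inv_mem hκ₀) (hκ u)) ⟨η u, hη u⟩ ?_).trans ?_
    · rw [hrep, mul_assoc, mul_assoc, ← mul_assoc (κ u), ← hu u]
    · show y (rep (κ₀⁻¹ * u)) _ = x u
      rw [hrep]

theorem exists_fixed_of_conj_roots_not_free_general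
    [Group G] (H : Subgroup G) (F : Set G)
    (hF : F ⊆ (H : Set G)) (L : Set (F → A))
    (hY : (SFTon H F hF L).Nonempty) (g : G)
    (hcl : ∀ t : G, ∀ n : ℕ, 0 < n → ∀ k : ↥H,
      (k : G) = (t * g * t⁻¹) ^ n → k ∉ freePart (SFTon H F hF L)) :
    (∃ x ∈ SFT F L, shift g x = x) ∧ g ∉ freePart (SFT F L) := by
  have hconj : ∀ t : G, ∃ y ∈ SFTon H F hF L,
      ∀ k : H, t * k * t⁻¹ ∈ Subgroup.zpowers g → shift k y = y := by
    intro t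
    obtain ⟨y, hy, hfix⟩ := exists_forall_mem_zpowers_shift_eq hY (c := t⁻¹ * g * t⁻¹⁻¹)
      (hcl t⁻¹)
    refine ⟨y, hy, fun k hk => hfix k ?_⟩
    obtain ⟨m, hm⟩ := Subgroup.mem_zpowers_iff.1 hk
    exact Subgroup.mem_zpowers_iff.2 ⟨m, by rw [conj_zpow, hm]; group⟩
  obtain ⟨x, hx, hgx⟩ := exists_mem_SFT_forall_shift_eq _ H hF hconj
  have hfix : shift g x = x := hgx g (Subgroup.mem_zpowers g)
  exact ⟨⟨x, hx, hfix⟩, fun hg => hg x hx hfix⟩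

/-- If `Y` is nonempty and no positive power of any conjugate of `g` lies in
the free part of `Y`, then `g` fixes some configuration of `X`; in particular
`g ∉ Free(X)`. -/
theorem exists_fixed_of_conj_roots_not_free
    [Group G] [Finite A] (H : Subgroup G) (F : Set G) (hFfin : F.Finite)
    (hF : F ⊆ (H : Set G)) (L : Set (F → A))
    (hY : (SFTon H F hF L).Nonempty) (g : G)
    (hcl : ∀ t : G, ∀ n : ℕ, 0 < n → ∀ k : ↥H,
      (k : G) = (t * g * t⁻¹) ^ n → k ∉ freePart (SFTon H F hF L)) :
    (∃ x ∈ SFT F L, shift g x = x) ∧ g ∉ freePart (SFT F L) :=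
  exists_fixed_of_conj_roots_not_free_general H F hF L hY g hcl
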